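/- Let G be an r-regular connected bipartite simple graph with r > 2 and distinct Laplacian eigenvalues θ_0, θ_1, …, θ_p (so θ_p = 2r), and let a, b, c, d be vertices of G with a ≠ b and c ≠ d. Then for every real t, (1/2)(e_a − e_b)^T U_{T(G)}(t) (e_c − e_d) = (1/2) Σ_{j=0}^{p−1} exp(−i t (r + 2θ_j + 2)/2) · (e_a − e_b)^T E_{θ_j}(G) (e_c − e_d) · ( cos(Δ_j t / 2) + i ((2 − r)/Δ_j) sin(Δ_j t / 2) ) + (1/2) exp(−3 i t r) · (e_a − e_b)^T E_{2r}(G) (e_c − e_d), where Δ_j = √((r+2)² − 4θ_j), and on the left-hand side e_a − e_b and e_c − e_d denote the corresponding pair states of the total graph T(G). -/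

import Mathlib

open Matrix Complex

/-- The total graph of a simple graph `G`: vertices are the vertices and edges of `G`,
with adjacency given by adjacency/incidence in `G`. -/
def SimpleGraph.totalGraph {V : Type*} (G : SimpleGraph V) : SimpleGraph (V ⊕ G.edgeSet) where
  Adj x y :=
    match x, y with
    | Sum.inl u, Sum.inl v => G.Adj u v
    | Sum.inl u, Sum.inr e => u ∈ (e : Sym2 V)
    | Sum.inr e, Sum.inl v => v ∈ (e : Sym2 V)
    | Sum.inr e, Sum.inr f => e ≠ f ∧ ∃ v, v ∈ (e : Sym2 V) ∧ v ∈ (f : Sym2 V)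
  symm := ⟨by
    rintro (u | e) (v | f) h
    · exact h.symm
    · exact h
    · exact h
    · exact ⟨h.1.symm, let ⟨v, hv1, hv2⟩ := h.2; ⟨v, hv2, hv1⟩⟩⟩
  loopless := ⟨by
    rintro (u | e) h
    · exact G.ne_of_adj h rfl
    · exact h.1 rfl⟩

noncomputable instance {V : Type*} (G : SimpleGraph V) : DecidableRel G.totalGraph.Adj :=
  Classical.decRel _

/-- The Laplacian transition matrix `exp(-i t L)` of a graph. -/
noncomputable def SimpleGraph.transitionMatrix {V : Type*} (G : SimpleGraph V) [Fintype V]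
    [DecidableEq V] [DecidableRel G.Adj] (t : ℝ) : Matrix V V ℂ :=
  NormedSpace.exp ((-(Complex.I * (t : ℂ))) • (G.lapMatrix ℝ).map Complex.ofReal)

/-- The (unnormalized) pair state `e_a - e_b`, as a complex vector. -/
def pairState {V : Type*} [DecidableEq V] (a b : V) : V → ℂ :=
  Pi.single a 1 - Pi.single b 1

/-- The quantity `(1/2) (e_a - e_b)ᵀ U_G(t) (e_c - e_d)`. -/
noncomputable def pairTransfer {V : Type*} (G : SimpleGraph V) [Fintype V] [DecidableEq V]
    [DecidableRel G.Adj] (t : ℝ) (a b c d : V) : ℂ :=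
  (1 / 2 : ℂ) * (pairState a b ⬝ᵥ (G.transitionMatrix t) *ᵥ pairState c d)

/-- Laplacian perfect pair state transfer between the (distinct) pair states
`e_a - e_b` and `e_c - e_d`. -/
def IsLPPST {V : Type*} (G : SimpleGraph V) [Fintype V] [DecidableEq V]
    [DecidableRel G.Adj] (a b c d : V) : Prop :=
  a ≠ b ∧ c ≠ d ∧ s(a, b) ≠ s(c, d) ∧
    ∃ t : ℝ, t ≠ 0 ∧ ‖pairTransfer G t a b c d‖ = 1

/-- Laplacian pretty good pair state transfer between the (distinct) pair states
`e_a - e_b` and `e_c - e_d`. -/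
def IsLPGPST {V : Type*} (G : SimpleGraph V) [Fintype V] [DecidableEq V]
    [DecidableRel G.Adj] (a b c d : V) : Prop :=
  a ≠ b ∧ c ≠ d ∧ s(a, b) ≠ s(c, d) ∧
    ∀ ε : ℝ, 0 < ε → ∃ t : ℝ, t ≠ 0 ∧ |‖pairTransfer G t a b c d‖ - 1| < ε

/-- The pair state `e_a - e_b` as a real vector in Euclidean space. -/
noncomputable def pairStateR {V : Type*} [Fintype V] [DecidableEq V] (a b : V) :
    EuclideanSpace ℝ V :=
  EuclideanSpace.single a 1 - EuclideanSpace.single b 1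

/-- The Laplacian eigenprojection `E_θ(G)`, i.e. the orthogonal projection onto the
`θ`-eigenspace of the Laplacian, applied to a vector. -/
noncomputable def lapProj {V : Type*} (G : SimpleGraph V) [Fintype V] [DecidableEq V]
    [DecidableRel G.Adj] (θ : ℝ) (x : EuclideanSpace ℝ V) : EuclideanSpace ℝ V :=
  (Submodule.orthogonalProjectionOnto
    (Module.End.eigenspace (Matrix.toEuclideanLin (G.lapMatrix ℝ)) θ) x : EuclideanSpace ℝ V)

/-- `θ` is a Laplacian eigenvalue of `G`. -/
def IsLapEigenvalue {V : Type*} (G : SimpleGraph V) [Fintype V] [DecidableEq V]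
    [DecidableRel G.Adj] (θ : ℝ) : Prop :=
  Module.End.HasEigenvalue (Matrix.toEuclideanLin (G.lapMatrix ℝ)) θ

/-- The pair states `e_a - e_b` and `e_c - e_d` are Laplacian strongly cospectral. -/
def StronglyCospectral {V : Type*} (G : SimpleGraph V) [Fintype V] [DecidableEq V]
    [DecidableRel G.Adj] (a b c d : V) : Prop :=
  ∀ θ : ℝ, lapProj G θ (pairStateR a b) = lapProj G θ (pairStateR c d) ∨
    lapProj G θ (pairStateR a b) = -lapProj G θ (pairStateR c d)

/-- `θ ∈ Φ⁺_{ab,cd}`. -/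
def InPhiPlus {V : Type*} (G : SimpleGraph V) [Fintype V] [DecidableEq V]
    [DecidableRel G.Adj] (θ : ℝ) (a b c d : V) : Prop :=
  lapProj G θ (pairStateR a b) = lapProj G θ (pairStateR c d) ∧
    lapProj G θ (pairStateR a b) ≠ 0

/-- `θ ∈ Φ⁻_{ab,cd}`. -/
def InPhiMinus {V : Type*} (G : SimpleGraph V) [Fintype V] [DecidableEq V]
    [DecidableRel G.Adj] (θ : ℝ) (a b c d : V) : Prop :=
  lapProj G θ (pairStateR a b) = -lapProj G θ (pairStateR c d) ∧
    lapProj G θ (pairStateR a b) ≠ 0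

/-- `θ⁺ = (r + 2 + 2θ + √((r+2)² - 4θ))/2`. -/
noncomputable def thetaP (r θ : ℝ) : ℝ :=
  (r + 2 + 2 * θ + Real.sqrt ((r + 2) ^ 2 - 4 * θ)) / 2

/-- `θ⁻ = (r + 2 + 2θ - √((r+2)² - 4θ))/2`. -/
noncomputable def thetaM (r θ : ℝ) : ℝ :=
  (r + 2 + 2 * θ - Real.sqrt ((r + 2) ^ 2 - 4 * θ)) / 2

/-- `G` is bipartite with parts `X` and `Xᶜ`. -/
def IsBipartiteWith {V : Type*} (G : SimpleGraph V) (X : Set V) : Prop :=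
  ∀ ⦃u v⦄, G.Adj u v → (u ∈ X ↔ v ∉ X)

/-- `G` is bipartite. -/
def IsBipartite {V : Type*} (G : SimpleGraph V) : Prop :=
  ∃ X : Set V, IsBipartiteWith G X


set_option linter.unusedSectionVars false
set_option linter.unusedVariables false

section AuxLemmas
open Finset

lemma exp_mulVec_eigen {n : Type*} [Fintype n] [DecidableEq n] (A : Matrix n n ℂ)
    (v : n → ℂ) (lam : ℂ) (h : A *ᵥ v = lam • v) :
    NormedSpace.exp A *ᵥ v = Complex.exp lam • v := by
  letI : SeminormedRing (Matrix n n ℂ) := Matrix.linftyOpSemiNormedRing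
  letI : NormedRing (Matrix n n ℂ) := Matrix.linftyOpNormedRing
  letI : NormedAlgebra ℂ (Matrix n n ℂ) := Matrix.linftyOpNormedAlgebra
  have hpow : ∀ k : ℕ, A ^ k *ᵥ v = lam ^ k • v := by
    intro k
    induction k with
    | zero => simp
    | succ k ih =>
      rw [pow_succ, pow_succ, ← mulVec_mulVec, h, mulVec_smul, ih, smul_smul, mul_comm]
  let L : Matrix n n ℂ →ₗ[ℂ] (n → ℂ) :=
    { toFun := fun B => B *ᵥ v
      map_add' := fun B C => add_mulVec B C v
      map_smul' := fun c B => smul_mulVec c B v }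
  have hLc : Continuous L := L.continuous_of_finiteDimensional
  have hsum : Summable fun k : ℕ => (k.factorial⁻¹ : ℂ) • A ^ k :=
    NormedSpace.expSeries_summable' (𝕂 := ℂ) A
  have h1 : NormedSpace.exp A *ᵥ v = L (∑' k : ℕ, (k.factorial⁻¹ : ℂ) • A ^ k) := by
    rw [NormedSpace.exp_eq_tsum (𝕂 := ℂ)]
    rfl
  have h2 := (hsum.hasSum.map L hLc).tsum_eq
  rw [h1, ← h2]
  have h3 : ∀ k : ℕ, (L ∘ fun k : ℕ => (k.factorial⁻¹ : ℂ) • A ^ k) k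
      = ((k.factorial⁻¹ : ℂ) * lam ^ k) • v := by
    intro k
    simp only [Function.comp_apply, L, LinearMap.coe_mk, AddHom.coe_mk]
    show ((k.factorial⁻¹ : ℂ) • A ^ k) *ᵥ v = _
    rw [smul_mulVec, hpow k, smul_smul]
  rw [tsum_congr h3, Summable.tsum_smul_const]
  · congr 1
    rw [Complex.exp_eq_exp_ℂ, NormedSpace.exp_eq_tsum (𝕂 := ℂ)]
    simp_rw [smul_eq_mul]
  · exact (NormedSpace.expSeries_summable' (𝕂 := ℂ) lam).congr (by simp [smul_eq_mul])

section Combinatorial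

variable {V : Type*} (G : SimpleGraph V) [Fintype V] [DecidableEq V] [DecidableRel G.Adj]

/-- Sum of `x` over the endpoints of `z`. -/
def incSum {R : Type*} [AddCommMonoid R] (x : V → R) (z : Sym2 V) : R :=
  ∑ v : V, if v ∈ z then x v else 0

@[simp] lemma totalGraph_adj_inl_inl {u v : V} :
    G.totalGraph.Adj (Sum.inl u) (Sum.inl v) ↔ G.Adj u v := Iff.rfl

@[simp] lemma totalGraph_adj_inl_inr {u : V} {e : G.edgeSet} :
    G.totalGraph.Adj (Sum.inl u) (Sum.inr e) ↔ u ∈ (e : Sym2 V) := Iff.rfl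

@[simp] lemma totalGraph_adj_inr_inl {u : V} {e : G.edgeSet} :
    G.totalGraph.Adj (Sum.inr e) (Sum.inl u) ↔ u ∈ (e : Sym2 V) := Iff.rfl

@[simp] lemma totalGraph_adj_inr_inr {e f : G.edgeSet} :
    G.totalGraph.Adj (Sum.inr e) (Sum.inr f) ↔
      e ≠ f ∧ ∃ v, v ∈ (e : Sym2 V) ∧ v ∈ (f : Sym2 V) := Iff.rfl

lemma edge_repr (e : G.edgeSet) : ∃ a b : V, G.Adj a b ∧ (e : Sym2 V) = s(a, b) := by
  obtain ⟨z, hz⟩ := e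
  induction z with
  | _ a b => exact ⟨a, b, G.mem_edgeSet.mp hz, rfl⟩

lemma incSum_mk {R : Type*} [AddCommMonoid R] (x : V → R) {a b : V} (hab : a ≠ b) :
    incSum x s(a, b) = x a + x b := by
  have h : (Finset.univ.filter (fun v => v ∈ s(a, b))) = {a, b} := by
    ext v; simp [Sym2.mem_iff]
  rw [incSum, ← Finset.sum_filter, h, Finset.sum_pair hab]

lemma sym2_eq_of_mem_mem {a b : V} (hab : a ≠ b) {z : Sym2 V} (ha : a ∈ z) (hb : b ∈ z) :
    z = s(a, b) := by
  induction z with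
  | _ x y =>
    rw [Sym2.mem_iff] at ha hb
    rcases ha with rfl | rfl <;> rcases hb with rfl | rfl
    · exact absurd rfl hab
    · rfl
    · exact Sym2.eq_swap
    · exact absurd rfl hab.symm

lemma sum_neighborFinset {R : Type*} [AddCommMonoid R] {W : Type*} [Fintype W]
    (H : SimpleGraph W) [DecidableRel H.Adj] (v : W) (g : W → R) :
    ∑ y ∈ H.neighborFinset v, g y = ∑ y : W, if H.Adj v y then g y else 0 := by
  rw [← Finset.sum_filter]
  congr 1
  ext y; simp

lemma sum_incident {R : Type*} [AddCommMonoid R] (f : Sym2 V → R) (u : V) :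
    ∑ e : G.edgeSet, (if u ∈ (e : Sym2 V) then f (e : Sym2 V) else 0)
      = ∑ v ∈ G.neighborFinset u, f s(u, v) := by
  rw [← Finset.sum_filter]
  refine Finset.sum_bij' (fun e he => Sym2.Mem.other' (Finset.mem_filter.mp he).2)
    (fun v hv => (⟨s(u, v), G.mem_edgeSet.mpr ((G.mem_neighborFinset u v).mp hv)⟩ : G.edgeSet))
    ?_ ?_ ?_ ?_ ?_
  · intro e he
    have hm := (Finset.mem_filter.mp he).2
    rw [G.mem_neighborFinset]
    have hspec := Sym2.other_spec' hm
    have := e.2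
    rw [← hspec] at this
    exact G.mem_edgeSet.mp this
  · intro v hv; exact Finset.mem_filter.mpr ⟨Finset.mem_univ _, Sym2.mem_mk_left u v⟩
  · intro e he
    apply Subtype.ext
    exact Sym2.other_spec' (Finset.mem_filter.mp he).2
  · intro v hv
    have hadj : G.Adj u v := (G.mem_neighborFinset u v).mp hv
    have hm : u ∈ (⟨s(u, v), G.mem_edgeSet.mpr hadj⟩ : G.edgeSet).1 := Sym2.mem_mk_left u v
    have := Sym2.other_spec' hm
    exact Sym2.congr_right.mp this
  · intro e he
    exact congrArg f (Sym2.other_spec' (Finset.mem_filter.mp he).2).symm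

end Combinatorial

section Blocks

variable {V : Type*} (G : SimpleGraph V) [Fintype V] [DecidableEq V] [DecidableRel G.Adj]
variable {R : Type*} [CommRing R] {r : ℕ}

lemma sum_adj_inl_inl (u : V) (g : V → R) :
    ∑ v : V, (if G.totalGraph.Adj (Sum.inl u) (Sum.inl v) then g v else 0)
      = ∑ v : V, (if G.Adj u v then g v else 0) :=
  Finset.sum_congr rfl fun v _ => if_congr (totalGraph_adj_inl_inl G) rfl rfl

lemma sum_adj_inl_inr (u : V) (g : G.edgeSet → R) :
    ∑ e : G.edgeSet, (if G.totalGraph.Adj (Sum.inl u) (Sum.inr e) then g e else 0)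
      = ∑ e : G.edgeSet, (if u ∈ (e : Sym2 V) then g e else 0) :=
  Finset.sum_congr rfl fun e _ => if_congr (totalGraph_adj_inl_inr G) rfl rfl

lemma sum_adj_inr_inl (e : G.edgeSet) (g : V → R) :
    ∑ v : V, (if G.totalGraph.Adj (Sum.inr e) (Sum.inl v) then g v else 0)
      = incSum g (e : Sym2 V) :=
  Finset.sum_congr rfl fun v _ => if_congr (totalGraph_adj_inr_inl G) rfl rfl

lemma totalGraph_deg_inl (hreg : G.IsRegularOfDegree r) (u : V) :
    ((G.totalGraph.degree (Sum.inl u) : ℕ) : R) = 2 * r := by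
  rw [SimpleGraph.degree_eq_sum_if_adj, Fintype.sum_sum_type, sum_adj_inl_inl, sum_adj_inl_inr,
    ← SimpleGraph.degree_eq_sum_if_adj, sum_incident G (fun _ => (1 : R)) u,
    Finset.sum_const, SimpleGraph.card_neighborFinset_eq_degree, hreg u, nsmul_eq_mul]
  ring

lemma edge_adj_split (e f : G.edgeSet) {a b : V} (hadj : G.Adj a b)
    (he : (e : Sym2 V) = s(a, b)) (g : G.edgeSet → R) :
    (if G.totalGraph.Adj (Sum.inr e) (Sum.inr f) then g f else 0)
      = ((if a ∈ (f : Sym2 V) then g f else 0) + (if b ∈ (f : Sym2 V) then g f else 0))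
        - (if f = e then g f + g f else 0) := by
  by_cases hfe : f = e
  · subst hfe
    rw [if_neg (G.totalGraph.irrefl), if_pos rfl, if_pos, if_pos]
    · ring
    · rw [he]; exact Sym2.mem_mk_right a b
    · rw [he]; exact Sym2.mem_mk_left a b
  · have hne : e ≠ f := fun h => hfe h.symm
    by_cases haf : a ∈ (f : Sym2 V)
    · have hbf : b ∉ (f : Sym2 V) := by
        intro hb
        exact hfe (Subtype.ext (by rw [he]; exact sym2_eq_of_mem_mem hadj.ne haf hb))
      rw [if_pos, if_pos haf, if_neg hbf, if_neg hfe]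
      · ring
      · exact ⟨hne, a, by rw [he]; exact Sym2.mem_mk_left a b, haf⟩
    · by_cases hbf : b ∈ (f : Sym2 V)
      · rw [if_pos, if_neg haf, if_pos hbf, if_neg hfe]
        · ring
        · exact ⟨hne, b, by rw [he]; exact Sym2.mem_mk_right a b, hbf⟩
      · rw [if_neg, if_neg haf, if_neg hbf, if_neg hfe]
        · ring
        · rintro ⟨-, v, hv1, hv2⟩
          rw [he, Sym2.mem_iff] at hv1
          rcases hv1 with rfl | rfl
          · exact haf hv2
          · exact hbf hv2

lemma sum_edge_adj (e : G.edgeSet) {a b : V} (hadj : G.Adj a b)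
    (he : (e : Sym2 V) = s(a, b)) (g : G.edgeSet → R) :
    ∑ f : G.edgeSet, (if G.totalGraph.Adj (Sum.inr e) (Sum.inr f) then g f else 0)
      = ((∑ f : G.edgeSet, if a ∈ (f : Sym2 V) then g f else 0)
          + ∑ f : G.edgeSet, if b ∈ (f : Sym2 V) then g f else 0) - (g e + g e) := by
  calc ∑ f : G.edgeSet, (if G.totalGraph.Adj (Sum.inr e) (Sum.inr f) then g f else 0)
      = ∑ f : G.edgeSet, (((if a ∈ (f : Sym2 V) then g f else 0)
          + (if b ∈ (f : Sym2 V) then g f else 0)) - (if f = e then g f + g f else 0)) :=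
        Finset.sum_congr rfl fun f _ => edge_adj_split G e f hadj he g
    _ = _ := by
        rw [Finset.sum_sub_distrib, Finset.sum_add_distrib, Finset.sum_ite_eq' Finset.univ e
          (fun f => g f + g f)]
        simp

lemma totalGraph_deg_inr (hreg : G.IsRegularOfDegree r) (e : G.edgeSet) :
    ((G.totalGraph.degree (Sum.inr e) : ℕ) : R) = 2 * r := by
  obtain ⟨a, b, hadj, he⟩ := edge_repr G e
  rw [SimpleGraph.degree_eq_sum_if_adj, Fintype.sum_sum_type, sum_adj_inr_inl,
    sum_edge_adj G e hadj he (fun _ => (1 : R))]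
  have h1 : incSum (fun _ => (1 : R)) (e : Sym2 V) = 2 := by
    rw [he, incSum_mk _ hadj.ne]; ring
  have h3 : ∀ u : V, ∑ f : G.edgeSet, (if u ∈ (f : Sym2 V) then (1:R) else 0) = (G.degree u : R) := by
    intro u
    rw [sum_incident G (fun _ => (1 : R)) u, Finset.sum_const,
      SimpleGraph.card_neighborFinset_eq_degree, nsmul_eq_mul, mul_one]
  rw [h1, h3 a, h3 b, hreg a, hreg b]
  push_cast
  ring

lemma S_incident (hreg : G.IsRegularOfDegree r) (x : V → R) (u : V) :
    ∑ e : G.edgeSet, (if u ∈ (e : Sym2 V) then incSum x (e : Sym2 V) else 0)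
      = 2 * (r : R) * x u - (G.lapMatrix R *ᵥ x) u := by
  rw [sum_incident G (fun z => incSum x z) u]
  have h1 : ∀ v ∈ G.neighborFinset u, incSum x s(u, v) = x u + x v := fun v hv =>
    incSum_mk x ((G.mem_neighborFinset u v).mp hv).ne
  rw [Finset.sum_congr rfl h1, Finset.sum_add_distrib, Finset.sum_const,
    SimpleGraph.card_neighborFinset_eq_degree, hreg u, nsmul_eq_mul,
    SimpleGraph.lapMatrix_mulVec_apply, hreg u]
  ring

lemma sum_nbr_eq (x : V → R) (u : V) :
    ∑ v : V, (if G.Adj u v then x v else 0) = (G.degree u : R) * x u - (G.lapMatrix R *ᵥ x) u := by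
  rw [← sum_neighborFinset, SimpleGraph.lapMatrix_mulVec_apply]
  ring

lemma incSum_zero' {z : Sym2 V} : incSum (fun _ => (0 : R)) z = 0 := by
  unfold incSum; simp

lemma lapT_w1_inl (hreg : G.IsRegularOfDegree r) (x : V → R) (u : V) :
    (G.totalGraph.lapMatrix R *ᵥ Sum.elim x 0) (Sum.inl u)
      = (r : R) * x u + (G.lapMatrix R *ᵥ x) u := by
  rw [SimpleGraph.lapMatrix_mulVec_apply, sum_neighborFinset, Fintype.sum_sum_type,
    sum_adj_inl_inl, sum_adj_inl_inr]
  simp only [Sum.elim_inl, Sum.elim_inr, Pi.zero_apply, ite_self, Finset.sum_const_zero, add_zero]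
  rw [sum_nbr_eq, hreg u, totalGraph_deg_inl G hreg u]
  ring

lemma lapT_w1_inr (x : V → R) (e : G.edgeSet) :
    (G.totalGraph.lapMatrix R *ᵥ Sum.elim x 0) (Sum.inr e) = -incSum x (e : Sym2 V) := by
  rw [SimpleGraph.lapMatrix_mulVec_apply, sum_neighborFinset, Fintype.sum_sum_type,
    sum_adj_inr_inl]
  simp only [Sum.elim_inl, Sum.elim_inr, Pi.zero_apply, ite_self, Finset.sum_const_zero,
    add_zero, mul_zero, zero_sub, neg_inj]

lemma lapT_w2_inl (hreg : G.IsRegularOfDegree r) (x : V → R) (u : V) :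
    (G.totalGraph.lapMatrix R *ᵥ Sum.elim 0 (fun e => incSum x (e : Sym2 V))) (Sum.inl u)
      = (G.lapMatrix R *ᵥ x) u - 2 * (r : R) * x u := by
  rw [SimpleGraph.lapMatrix_mulVec_apply, sum_neighborFinset, Fintype.sum_sum_type,
    sum_adj_inl_inl, sum_adj_inl_inr]
  simp only [Sum.elim_inl, Sum.elim_inr, Pi.zero_apply, ite_self, Finset.sum_const_zero,
    mul_zero, zero_add, zero_sub]
  rw [S_incident G hreg x u]
  ring

lemma lapT_w2_inr (hreg : G.IsRegularOfDegree r) (x : V → R) (e : G.edgeSet) :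
    (G.totalGraph.lapMatrix R *ᵥ Sum.elim 0 (fun e => incSum x (e : Sym2 V))) (Sum.inr e)
      = 2 * incSum x (e : Sym2 V) + incSum (G.lapMatrix R *ᵥ x) (e : Sym2 V) := by
  obtain ⟨a, b, hadj, he⟩ := edge_repr G e
  rw [SimpleGraph.lapMatrix_mulVec_apply, sum_neighborFinset, Fintype.sum_sum_type,
    sum_adj_inr_inl, totalGraph_deg_inr G hreg e]
  simp only [Sum.elim_inl, Sum.elim_inr, Pi.zero_apply]
  rw [sum_edge_adj G e hadj he (fun f => incSum x (f : Sym2 V)),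
    S_incident G hreg x a, S_incident G hreg x b, incSum_zero']
  have h4 : incSum x (e : Sym2 V) = x a + x b := by rw [he, incSum_mk _ hadj.ne]
  have h5 : incSum (G.lapMatrix R *ᵥ x) (e : Sym2 V)
      = (G.lapMatrix R *ᵥ x) a + (G.lapMatrix R *ᵥ x) b := by
    rw [he, incSum_mk _ hadj.ne]
  rw [h4, h5]
  ring

end Blocks

section Spectral

variable {V : Type*} (G : SimpleGraph V) [Fintype V] [DecidableEq V] [DecidableRel G.Adj] {r : ℕ}

lemma incSum_smul (c : ℝ) (x : V → ℝ) (z : Sym2 V) :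
    incSum (c • x) z = c * incSum x z := by
  unfold incSum
  rw [Finset.mul_sum]
  refine Finset.sum_congr rfl fun v _ => ?_
  split_ifs <;> simp

lemma hmap_aux (wR : (V ⊕ G.edgeSet) → ℝ) (i : V ⊕ G.edgeSet) :
    ((G.totalGraph.lapMatrix ℝ).map Complex.ofReal *ᵥ (fun j => ((wR j : ℝ) : ℂ))) i
      = (((G.totalGraph.lapMatrix ℝ *ᵥ wR) i : ℝ) : ℂ) :=
  (RingHom.map_mulVec Complex.ofRealHom (G.totalGraph.lapMatrix ℝ) wR i).symm

set_option maxHeartbeats 2000000 in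
/-- Transfer amount from a complexified eigenvector (eigenvalue `θ < 2r`). -/
lemma key_coeff (hreg : G.IsRegularOfDegree r) (x : V → ℝ) (θ : ℝ) (hθlt : θ < 2 * r)
    (hx : G.lapMatrix ℝ *ᵥ x = θ • x) (u : V → ℂ) (t : ℝ) :
    Sum.elim u 0 ⬝ᵥ (G.totalGraph.transitionMatrix t *ᵥ Sum.elim (fun v => (x v : ℂ)) 0)
      = Complex.exp (-(Complex.I * (t : ℂ) * ((((r : ℝ) + 2 * θ + 2) / 2 : ℝ) : ℂ)))
        * (((Real.cos (Real.sqrt (((r : ℝ) + 2) ^ 2 - 4 * θ) * t / 2) : ℝ) : ℂ)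
          + Complex.I * (((2 - (r : ℝ)) / Real.sqrt (((r : ℝ) + 2) ^ 2 - 4 * θ) : ℝ) : ℂ)
            * ((Real.sin (Real.sqrt (((r : ℝ) + 2) ^ 2 - 4 * θ) * t / 2) : ℝ) : ℂ))
        * (u ⬝ᵥ fun v => (x v : ℂ)) := by
  classical
  set Δ : ℝ := Real.sqrt (((r : ℝ) + 2) ^ 2 - 4 * θ) with hΔdef
  have hargpos : 0 < ((r : ℝ) + 2) ^ 2 - 4 * θ := by nlinarith [sq_nonneg ((r : ℝ) - 2)]
  have hΔpos : 0 < Δ := Real.sqrt_pos.mpr hargpos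
  have hΔsq : Δ ^ 2 = ((r : ℝ) + 2) ^ 2 - 4 * θ := Real.sq_sqrt hargpos.le
  set w1R : (V ⊕ G.edgeSet) → ℝ := Sum.elim x 0 with hw1R
  set w2R : (V ⊕ G.edgeSet) → ℝ := Sum.elim 0 (fun e => incSum x (e : Sym2 V)) with hw2R
  set w1 : (V ⊕ G.edgeSet) → ℂ := fun j => ((w1R j : ℝ) : ℂ) with hw1def
  set w2 : (V ⊕ G.edgeSet) → ℂ := fun j => ((w2R j : ℝ) : ℂ) with hw2def
  set M : Matrix (V ⊕ G.edgeSet) (V ⊕ G.edgeSet) ℂ :=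
    (G.totalGraph.lapMatrix ℝ).map Complex.ofReal with hMdef
  have hxv : ∀ v, (G.lapMatrix ℝ *ᵥ x) v = θ * x v := by
    intro v; rw [hx]; simp
  set R : ℂ := ((r : ℝ) : ℂ) with hR
  set Θ : ℂ := ((θ : ℝ) : ℂ) with hΘ
  set D : ℂ := ((Δ : ℝ) : ℂ) with hD
  have hD0 : D ≠ 0 := Complex.ofReal_ne_zero.mpr hΔpos.ne'
  have h2R : 2 * R - Θ ≠ 0 := by
    rw [hR, hΘ]
    intro h
    have : ((2 * (r : ℝ) - θ : ℝ) : ℂ) = 0 := by push_cast; push_cast at h; linear_combination h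
    have := Complex.ofReal_eq_zero.mp this
    linarith
  have hD2 : D ^ 2 = (R + 2) ^ 2 - 4 * Θ := by
    rw [hD, hR, hΘ]
    have := congrArg (Complex.ofReal) hΔsq
    push_cast at this ⊢
    linear_combination this
  -- block action
  have h1 : M *ᵥ w1 = (R + Θ) • w1 - w2 := by
    funext i
    rw [hMdef, hw1def, hmap_aux]
    cases i with
    | inl v =>
      rw [hw1R, lapT_w1_inl G hreg x v, hxv v]
      simp only [Pi.sub_apply, Pi.smul_apply, hw1def, hw2def, hw1R, hw2R, Sum.elim_inl,
        smul_eq_mul, hR, hΘ]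
      push_cast [Pi.zero_apply]
      ring
    | inr e =>
      rw [hw1R, lapT_w1_inr G x e]
      simp only [Pi.sub_apply, Pi.smul_apply, hw1def, hw2def, hw1R, hw2R, Sum.elim_inr,
        smul_eq_mul, hR, hΘ]
      push_cast [Pi.zero_apply]
      ring
  have h2 : M *ᵥ w2 = (Θ + 2) • w2 - (2 * R - Θ) • w1 := by
    funext i
    rw [hMdef, hw2def, hmap_aux]
    cases i with
    | inl v =>
      rw [hw2R, lapT_w2_inl G hreg x v, hxv v]
      simp only [Pi.sub_apply, Pi.smul_apply, hw1def, hw2def, hw1R, hw2R, Sum.elim_inl,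
        smul_eq_mul, hR, hΘ]
      push_cast [Pi.zero_apply]
      ring
    | inr e =>
      rw [hw2R, lapT_w2_inr G hreg x e, hx, incSum_smul θ x]
      simp only [Pi.sub_apply, Pi.smul_apply, hw1def, hw2def, hw1R, hw2R, Sum.elim_inr,
        smul_eq_mul, hR, hΘ]
      push_cast [Pi.zero_apply]
      ring
  -- eigenvectors
  set vP : (V ⊕ G.edgeSet) → ℂ := (2 * (2 * R - Θ)) • w1 + (R - 2 + D) • w2 with hvPdef
  set vM : (V ⊕ G.edgeSet) → ℂ := (2 * (2 * R - Θ)) • w1 + (R - 2 - D) • w2 with hvMdef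
  set lamP : ℂ := (R + 2 * Θ + 2 - D) / 2 with hlamP
  set lamM : ℂ := (R + 2 * Θ + 2 + D) / 2 with hlamM
  have hvP : M *ᵥ vP = lamP • vP := by
    rw [hvPdef, mulVec_add, mulVec_smul, mulVec_smul, h1, h2]
    match_scalars
    · ring
    · linear_combination (1/2 : ℂ) * hD2
  have hvM : M *ᵥ vM = lamM • vM := by
    rw [hvMdef, mulVec_add, mulVec_smul, mulVec_smul, h1, h2]
    match_scalars
    · ring
    · linear_combination (1/2 : ℂ) * hD2
  set A : Matrix (V ⊕ G.edgeSet) (V ⊕ G.edgeSet) ℂ := (-(Complex.I * (t : ℂ))) • M with hA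
  have hexpP : NormedSpace.exp A *ᵥ vP = Complex.exp (-(Complex.I * (t : ℂ)) * lamP) • vP := by
    refine exp_mulVec_eigen A vP _ ?_
    rw [hA, smul_mulVec, hvP, smul_smul]
  have hexpM : NormedSpace.exp A *ᵥ vM = Complex.exp (-(Complex.I * (t : ℂ)) * lamM) • vM := by
    refine exp_mulVec_eigen A vM _ ?_
    rw [hA, smul_mulVec, hvM, smul_smul]
  set sP : ℂ := (D - R + 2) / (4 * D * (2 * R - Θ)) with hsP
  set sM : ℂ := (D + R - 2) / (4 * D * (2 * R - Θ)) with hsM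
  have hw1comb : w1 = sP • vP + sM • vM := by
    rw [hvPdef, hvMdef, hsP, hsM]
    match_scalars
    · field_simp
      linear_combination (-4 * D) * mul_inv_cancel₀ h2R
    · field_simp
      ring
  -- dot products
  have hue2 : Sum.elim u 0 ⬝ᵥ w2 = 0 := by
    rw [dotProduct, Fintype.sum_sum_type]
    simp [hw2def, hw2R]
  have hue1 : Sum.elim u 0 ⬝ᵥ w1 = u ⬝ᵥ (fun v => (x v : ℂ)) := by
    rw [dotProduct, Fintype.sum_sum_type, dotProduct]
    simp [hw1def, hw1R]
  have hueP : Sum.elim u 0 ⬝ᵥ vP = (2 * (2 * R - Θ)) * (u ⬝ᵥ fun v => (x v : ℂ)) := by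
    rw [hvPdef, dotProduct_add, dotProduct_smul, dotProduct_smul, hue1, hue2]
    simp [smul_eq_mul]
  have hueM : Sum.elim u 0 ⬝ᵥ vM = (2 * (2 * R - Θ)) * (u ⬝ᵥ fun v => (x v : ℂ)) := by
    rw [hvMdef, dotProduct_add, dotProduct_smul, dotProduct_smul, hue1, hue2]
    simp [smul_eq_mul]
  have htm : G.totalGraph.transitionMatrix t = NormedSpace.exp A := rfl
  have hvec : (Sum.elim (fun v => (x v : ℂ)) 0 : (V ⊕ G.edgeSet) → ℂ) = w1 := by
    funext i
    cases i <;> simp [hw1def, hw1R]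
  rw [htm, hvec, hw1comb, mulVec_add, mulVec_smul, mulVec_smul, hexpP, hexpM,
    dotProduct_add]
  simp only [smul_smul, dotProduct_smul, smul_eq_mul, hueP, hueM]
  -- now a pure scalar identity
  set tc : ℂ := ((t : ℝ) : ℂ) with htc
  set μc : ℂ := ((((r : ℝ) + 2 * θ + 2) / 2 : ℝ) : ℂ) with hμc
  have hμ' : μc = (R + 2 * Θ + 2) / 2 := by rw [hμc, hR, hΘ]; push_cast; ring
  set A0 : ℂ := Complex.exp (-(Complex.I * tc * μc)) with hA0
  set B : ℂ := Complex.exp (Complex.I * tc * (D / 2)) with hB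
  set C : ℂ := Complex.exp (-(Complex.I * tc * (D / 2))) with hC
  have heP : Complex.exp (-(Complex.I * tc) * lamP) = A0 * B := by
    rw [hA0, hB, ← Complex.exp_add]
    congr 1
    rw [hlamP, hμ']
    ring
  have heM : Complex.exp (-(Complex.I * tc) * lamM) = A0 * C := by
    rw [hA0, hC, ← Complex.exp_add]
    congr 1
    rw [hlamM, hμ']
    ring
  have hcos : ((Real.cos (Δ * t / 2) : ℝ) : ℂ) = (B + C) / 2 := by
    rw [Complex.ofReal_cos]
    show (Complex.exp ((Δ * t / 2 : ℝ) * Complex.I) + Complex.exp (-(Δ * t / 2 : ℝ) * Complex.I)) / 2 = _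
    rw [hB, hC]
    congr 2
    · congr 1
      rw [hD, htc]
      push_cast
      ring
    · congr 1
      rw [hD, htc]
      push_cast
      ring
  have hsin : ((Real.sin (Δ * t / 2) : ℝ) : ℂ) = (C - B) * Complex.I / 2 := by
    rw [Complex.ofReal_sin]
    show (Complex.exp (-(Δ * t / 2 : ℝ) * Complex.I) - Complex.exp ((Δ * t / 2 : ℝ) * Complex.I)) * Complex.I / 2 = _
    rw [hB, hC]
    congr 3
    · congr 1
      rw [hD, htc]
      push_cast
      ring
    · congr 1
      rw [hD, htc]
      push_cast
      ring
  have hof : (((2 - (r : ℝ)) / Δ : ℝ) : ℂ) = (2 - R) / D := by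
    rw [hR, hD]
    push_cast
    ring
  have hterm : Complex.I * (((2 - (r : ℝ)) / Δ : ℝ) : ℂ) * ((Real.sin (Δ * t / 2) : ℝ) : ℂ)
      = (2 - R) * (B - C) / (2 * D) := by
    rw [hof, hsin]
    have hI : Complex.I * Complex.I = -1 := Complex.I_mul_I
    linear_combination ((2 - R) * (C - B) / (2 * D)) * hI
  rw [heP, heM, hcos, hterm, hsP, hsM]
  have h4D : (4 : ℂ) * D * (2 * R - Θ) ≠ 0 := by
    intro h
    rcases mul_eq_zero.mp h with h' | h'
    · rcases mul_eq_zero.mp h' with h'' | h''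
      · norm_num at h''
      · exact hD0 h''
    · exact h2R h'
  have h2R' : R * 2 - Θ ≠ 0 := by rwa [mul_comm]
  field_simp
  ring

end Spectral

end AuxLemmas


section MoreAux

variable {V : Type*} (G : SimpleGraph V) [Fintype V] [DecidableEq V] [DecidableRel G.Adj] {r : ℕ}

lemma dot_sum {n : Type*} [Fintype n] (u : n → ℂ) (s : Finset ℕ) (f : ℕ → n → ℂ) :
    u ⬝ᵥ (∑ j ∈ s, f j) = ∑ j ∈ s, u ⬝ᵥ f j := by
  classical
  induction s using Finset.cons_induction with
  | empty => simp
  | cons j s hj ih => rw [Finset.sum_cons, Finset.sum_cons, dotProduct_add, ih]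

lemma mulVec_sum' {n m : Type*} [Fintype n] [Fintype m] (A : Matrix m n ℂ) (s : Finset ℕ)
    (f : ℕ → n → ℂ) : A *ᵥ (∑ j ∈ s, f j) = ∑ j ∈ s, A *ᵥ f j := by
  rw [← Matrix.mulVecLin_apply, map_sum]
  simp [Matrix.mulVecLin_apply]

lemma sum_apply_eucl (s : Finset ℕ) (f : ℕ → EuclideanSpace ℝ V) (v : V) :
    (∑ j ∈ s, f j) v = ∑ j ∈ s, f j v := by
  classical
  induction s using Finset.cons_induction with
  | empty => rfl
  | cons j s hj ih => rw [Finset.sum_cons, Finset.sum_cons, ← ih]; rfl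

lemma pairState_inl (a b : V) :
    (pairState (Sum.inl a) (Sum.inl b) : (V ⊕ G.edgeSet) → ℂ) = Sum.elim (pairState a b) 0 := by
  funext i
  cases i with
  | inl v => simp [pairState, Pi.single_apply, Sum.inl.injEq]
  | inr e => simp [pairState, Pi.single_apply]

lemma pairState_cast (a b : V) :
    (pairState a b : V → ℂ) = fun v => (((pairStateR a b : EuclideanSpace ℝ V) v : ℝ) : ℂ) := by
  funext v
  have hv : (pairStateR a b : EuclideanSpace ℝ V) v
      = (if v = a then (1:ℝ) else 0) - (if v = b then (1:ℝ) else 0) := by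
    have h1 : (pairStateR a b : EuclideanSpace ℝ V) v
        = (EuclideanSpace.single a (1:ℝ) : EuclideanSpace ℝ V) v
          - (EuclideanSpace.single b (1:ℝ) : EuclideanSpace ℝ V) v := rfl
    rw [h1, EuclideanSpace.single_apply, EuclideanSpace.single_apply]
  rw [hv]
  simp only [pairState, Pi.sub_apply, Pi.single_apply]
  split_ifs <;> norm_num

lemma pairState_dot (a b : V) (y : EuclideanSpace ℝ V) :
    (pairState a b ⬝ᵥ fun v => ((y v : ℝ) : ℂ))
      = ((inner ℝ (pairStateR a b) y : ℝ) : ℂ) := by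
  have hin : (inner ℝ (pairStateR a b) y : ℝ) = ∑ v : V, (pairStateR a b : EuclideanSpace ℝ V) v * y v := by
    simp [PiLp.inner_apply, RCLike.inner_apply, conj_trivial]
    exact Finset.sum_congr rfl fun _ _ => mul_comm _ _
  rw [hin, dotProduct, pairState_cast]
  push_cast
  rfl

/-- The `θ = 2r` case: transfer from the top eigenvector. -/
lemma key_top (hreg : G.IsRegularOfDegree r) (x : V → ℝ)
    (hx : G.lapMatrix ℝ *ᵥ x = (2 * (r : ℝ)) • x) (u : V → ℂ) (t : ℝ) :
    Sum.elim u 0 ⬝ᵥ (G.totalGraph.transitionMatrix t *ᵥ Sum.elim (fun v => (x v : ℂ)) 0)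
      = Complex.exp (-(3 * Complex.I * (t : ℂ) * ((r : ℝ) : ℂ))) * (u ⬝ᵥ fun v => (x v : ℂ)) := by
  classical
  have hxv : ∀ v, (G.lapMatrix ℝ *ᵥ x) v = 2 * (r : ℝ) * x v := fun v => by rw [hx]; simp
  have hinc : ∀ e : G.edgeSet, incSum x (e : Sym2 V) = 0 := by
    have h1 : ∀ e : G.edgeSet, incSum x (e : Sym2 V) * incSum x (e : Sym2 V)
        = ∑ v : V, (if v ∈ (e : Sym2 V) then x v * incSum x (e : Sym2 V) else 0) := by
      intro e
      conv_lhs => rw [incSum]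
      rw [Finset.sum_mul]
      exact Finset.sum_congr rfl fun v _ => by split_ifs <;> simp [incSum]
    have h2 : ∑ e : G.edgeSet, incSum x (e : Sym2 V) * incSum x (e : Sym2 V) = 0 := by
      rw [Finset.sum_congr rfl fun e _ => h1 e, Finset.sum_comm]
      have h3 : ∀ v : V, ∑ e : G.edgeSet, (if v ∈ (e : Sym2 V) then x v * incSum x (e : Sym2 V) else 0)
          = x v * ∑ e : G.edgeSet, (if v ∈ (e : Sym2 V) then incSum x (e : Sym2 V) else 0) := by
        intro v
        rw [Finset.mul_sum]
        exact Finset.sum_congr rfl fun e _ => by split_ifs <;> simp [incSum]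
      rw [Finset.sum_congr rfl fun v _ => h3 v]
      refine Finset.sum_eq_zero fun v _ => ?_
      rw [S_incident G hreg x v, hxv v]
      ring
    intro e
    have := (Finset.sum_eq_zero_iff_of_nonneg
      (fun e _ => mul_self_nonneg _)).mp h2 e (Finset.mem_univ e)
    exact mul_self_eq_zero.mp this
  set w1 : (V ⊕ G.edgeSet) → ℂ := fun j => ((Sum.elim x 0 j : ℝ) : ℂ) with hw1def
  have h1 : ((G.totalGraph.lapMatrix ℝ).map Complex.ofReal) *ᵥ w1
      = (((3 * (r : ℝ) : ℝ)) : ℂ) • w1 := by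
    funext i
    rw [hw1def, hmap_aux]
    cases i with
    | inl v =>
      rw [lapT_w1_inl G hreg x v, hxv v]
      simp only [Pi.smul_apply, smul_eq_mul, Sum.elim_inl]
      push_cast
      ring
    | inr e =>
      rw [lapT_w1_inr G x e, hinc e]
      simp only [Pi.smul_apply, smul_eq_mul, Sum.elim_inr]
      push_cast [Pi.zero_apply]
      ring
  have hexp : NormedSpace.exp
        ((-(Complex.I * (t : ℂ))) • ((G.totalGraph.lapMatrix ℝ).map Complex.ofReal)) *ᵥ w1
      = Complex.exp ((-(Complex.I * (t : ℂ))) * (((3 * (r : ℝ) : ℝ)) : ℂ)) • w1 := by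
    refine exp_mulVec_eigen _ w1 _ ?_
    rw [smul_mulVec, h1, smul_smul]
  have htm : G.totalGraph.transitionMatrix t = NormedSpace.exp
      ((-(Complex.I * (t : ℂ))) • ((G.totalGraph.lapMatrix ℝ).map Complex.ofReal)) := rfl
  have hvec : (Sum.elim (fun v => (x v : ℂ)) 0 : (V ⊕ G.edgeSet) → ℂ) = w1 := by
    funext i; cases i <;> simp [hw1def]
  have hue1 : Sum.elim u 0 ⬝ᵥ w1 = u ⬝ᵥ (fun v => (x v : ℂ)) := by
    rw [dotProduct, Fintype.sum_sum_type, dotProduct]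
    simp [hw1def]
  rw [htm, hvec, hexp, dotProduct_smul, smul_eq_mul, hue1]
  congr 2
  push_cast
  ring

/-- Resolution of the identity from a complete list of eigenvalues. -/
lemma lap_resolution (θ : ℕ → ℝ) (p : ℕ) (hmono : StrictMonoOn θ (Set.Iic p))
    (hall : ∀ μ : ℝ, IsLapEigenvalue G μ → ∃ j ≤ p, θ j = μ) (X : EuclideanSpace ℝ V) :
    ∑ j ∈ Finset.range (p + 1), lapProj G (θ j) X = X := by
  classical
  have hT : (Matrix.toEuclideanLin (G.lapMatrix ℝ)).IsSymmetric := by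
    rw [← Matrix.isHermitian_iff_isSymmetric, Matrix.IsHermitian,
      conjTranspose_eq_transpose_of_trivial]
    exact G.isSymm_lapMatrix (R := ℝ)
  set T := Matrix.toEuclideanLin (G.lapMatrix ℝ) with hTdef
  set S := X - ∑ j ∈ Finset.range (p + 1), lapProj G (θ j) X with hS
  have hmem : ∀ μ : ℝ, S ∈ (Module.End.eigenspace T μ)ᗮ := by
    intro μ
    rw [Submodule.mem_orthogonal]
    intro y hy
    by_cases hμ : ∃ k ≤ p, θ k = μ
    · obtain ⟨k, hkp, hkμ⟩ := hμ
      rw [hS, inner_sub_right, inner_sum]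
      have hky : ∀ j ∈ Finset.range (p + 1), j ≠ k →
          inner ℝ y (lapProj G (θ j) X) = (0 : ℝ) := by
        intro j hj hjk
        have hjp : j ≤ p := by
          have := Finset.mem_range.mp hj; omega
        have hθne : μ ≠ θ j := by
          rw [← hkμ]
          intro h
          exact hjk ((hmono.injOn (Set.mem_Iic.mpr hkp) (Set.mem_Iic.mpr hjp) h).symm)
        exact hT.orthogonalFamily_eigenspaces hθne ⟨y, hy⟩
          ((Module.End.eigenspace T (θ j)).orthogonalProjectionOnto X)
      rw [Finset.sum_eq_single_of_mem k (Finset.mem_range.mpr (by omega)) hky]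
      have hyk : y ∈ Module.End.eigenspace T (θ k) := by rw [hkμ]; exact hy
      have h0 := Submodule.starProjection_inner_eq_zero (K := Module.End.eigenspace T (θ k)) X y hyk
      rw [inner_sub_left] at h0
      have h0' : inner ℝ X y - inner ℝ (lapProj G (θ k) X) y = (0 : ℝ) := h0
      linarith [real_inner_comm X y, real_inner_comm (lapProj G (θ k) X) y, h0']
    · have hy0 : y = 0 := by
        by_contra hne
        have hev : Module.End.HasEigenvalue T μ :=
          Module.End.hasEigenvalue_of_hasEigenvector ⟨hy, hne⟩
        obtain ⟨j, hj, hjμ⟩ := hall μ hev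
        exact hμ ⟨j, hj, hjμ⟩
      rw [hy0, inner_zero_left]
  have hSmem : S ∈ (⨆ μ : ℝ, Module.End.eigenspace T μ)ᗮ := by
    rw [← Submodule.iInf_orthogonal]
    exact (Submodule.mem_iInf _).mpr hmem
  rw [hT.orthogonalComplement_iSup_eigenspaces_eq_bot] at hSmem
  have hS0 : S = 0 := Submodule.mem_bot ℝ |>.mp hSmem
  rw [hS] at hS0
  exact (sub_eq_zero.mp hS0).symm

end MoreAux

/-- The entry formula for the pair-state transfer amount in the total graph of an `r`-regular
connected bipartite graph, for vertex-vertex pair states. -/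
theorem stmt13 {V : Type*} (G : SimpleGraph V) [Fintype V] [DecidableEq V] [DecidableRel G.Adj]
    (r : ℕ) (hr : 2 < r) (hreg : G.IsRegularOfDegree r) (hconn : G.Connected)
    (hbip : IsBipartite G)
    (θ : ℕ → ℝ) (p : ℕ) (hθ0 : θ 0 = 0) (hmono : StrictMonoOn θ (Set.Iic p))
    (heig : ∀ j ≤ p, IsLapEigenvalue G (θ j))
    (hall : ∀ μ : ℝ, IsLapEigenvalue G μ → ∃ j ≤ p, θ j = μ)
    (hθp : θ p = 2 * r)
    (a b c d : V) (hab : a ≠ b) (hcd : c ≠ d) (t : ℝ) :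
    pairTransfer G.totalGraph t (Sum.inl a) (Sum.inl b) (Sum.inl c) (Sum.inl d) =
      (1 / 2 : ℂ) * ∑ j ∈ Finset.range p,
        Complex.exp (-(Complex.I * (t : ℂ) * ((((r : ℝ) + 2 * θ j + 2) / 2 : ℝ) : ℂ))) *
          ((inner ℝ (pairStateR a b) (lapProj G (θ j) (pairStateR c d)) : ℝ) : ℂ) *
          (((Real.cos (Real.sqrt (((r : ℝ) + 2) ^ 2 - 4 * θ j) * t / 2) : ℝ) : ℂ) +
            Complex.I * (((2 - (r : ℝ)) / Real.sqrt (((r : ℝ) + 2) ^ 2 - 4 * θ j) : ℝ) : ℂ) *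
              ((Real.sin (Real.sqrt (((r : ℝ) + 2) ^ 2 - 4 * θ j) * t / 2) : ℝ) : ℂ)) +
      (1 / 2 : ℂ) * Complex.exp (-(3 * Complex.I * (t : ℂ) * ((r : ℝ) : ℂ))) *
        ((inner ℝ (pairStateR a b) (lapProj G (2 * (r : ℝ)) (pairStateR c d)) : ℝ) : ℂ) := by
  classical
  set X : EuclideanSpace ℝ V := pairStateR c d with hXdef
  have hres := lap_resolution G θ p hmono hall X
  have heigf : ∀ j, G.lapMatrix ℝ *ᵥ (fun v => lapProj G (θ j) X v)
      = (θ j) • (fun v => lapProj G (θ j) X v) := by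
    intro j
    have hmem : lapProj G (θ j) X
        ∈ Module.End.eigenspace (Matrix.toEuclideanLin (G.lapMatrix ℝ)) (θ j) :=
      SetLike.coe_mem _
    have hOp : Matrix.toEuclideanLin (G.lapMatrix ℝ) (lapProj G (θ j) X)
        = θ j • lapProj G (θ j) X := Module.End.mem_eigenspace_iff.mp hmem
    funext v
    have h2 := congrFun (congrArg (WithLp.equiv 2 (V → ℝ)) hOp) v
    simpa [Matrix.toEuclideanLin_apply] using h2
  have hpsc : (pairState (Sum.inl c) (Sum.inl d) : (V ⊕ G.edgeSet) → ℂ)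
      = ∑ j ∈ Finset.range (p + 1),
          Sum.elim (fun v => ((lapProj G (θ j) X v : ℝ) : ℂ)) 0 := by
    rw [pairState_inl G c d]
    funext i
    cases i with
    | inl v =>
      rw [Finset.sum_apply]
      simp only [Sum.elim_inl]
      rw [pairState_cast c d]
      have hXv : X v = (∑ j ∈ Finset.range (p + 1), lapProj G (θ j) X) v := by rw [hres]
      rw [sum_apply_eucl] at hXv
      show ((X v : ℝ) : ℂ) = _
      rw [hXv]
      push_cast
      rfl
    | inr e => simp [Finset.sum_apply]
  unfold pairTransfer
  rw [hpsc, pairState_inl G a b, mulVec_sum', dot_sum, Finset.sum_range_succ]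
  have hsum : ∑ j ∈ Finset.range p,
      (Sum.elim (pairState a b) (0 : G.edgeSet → ℂ) ⬝ᵥ (G.totalGraph.transitionMatrix t *ᵥ
        Sum.elim (fun v => ((lapProj G (θ j) X v : ℝ) : ℂ)) 0))
      = ∑ j ∈ Finset.range p,
        Complex.exp (-(Complex.I * (t : ℂ) * ((((r : ℝ) + 2 * θ j + 2) / 2 : ℝ) : ℂ))) *
          (((Real.cos (Real.sqrt (((r : ℝ) + 2) ^ 2 - 4 * θ j) * t / 2) : ℝ) : ℂ) +
            Complex.I * (((2 - (r : ℝ)) / Real.sqrt (((r : ℝ) + 2) ^ 2 - 4 * θ j) : ℝ) : ℂ) *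
              ((Real.sin (Real.sqrt (((r : ℝ) + 2) ^ 2 - 4 * θ j) * t / 2) : ℝ) : ℂ)) *
          ((inner ℝ (pairStateR a b) (lapProj G (θ j) X) : ℝ) : ℂ) := by
    refine Finset.sum_congr rfl fun j hj => ?_
    have hjp : j < p := Finset.mem_range.mp hj
    have hθlt : θ j < 2 * (r : ℝ) := by
      have h := hmono (Set.mem_Iic.mpr hjp.le) (Set.mem_Iic.mpr le_rfl) hjp
      rw [hθp] at h
      exact h
    have hkey := key_coeff G hreg (fun v => lapProj G (θ j) X v) (θ j) hθlt (heigf j)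
      (pairState a b) t
    simp only [] at hkey
    rw [pairState_dot a b (lapProj G (θ j) X)] at hkey
    exact hkey
  rw [hsum]
  have hxp : G.lapMatrix ℝ *ᵥ (fun v => lapProj G (θ p) X v)
      = (2 * (r : ℝ)) • (fun v => lapProj G (θ p) X v) := by
    calc G.lapMatrix ℝ *ᵥ (fun v => lapProj G (θ p) X v)
        = θ p • (fun v => lapProj G (θ p) X v) := heigf p
      _ = (2 * (r : ℝ)) • (fun v => lapProj G (θ p) X v) := by rw [hθp]
  have htop := key_top G hreg (fun v => lapProj G (θ p) X v) hxp (pairState a b) t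
  simp only [] at htop
  rw [pairState_dot a b (lapProj G (θ p) X)] at htop
  rw [htop, show (2 * (r : ℝ)) = θ p from hθp.symm]
  rw [mul_add, Finset.mul_sum, Finset.mul_sum]
  congr 1
  · exact Finset.sum_congr rfl fun j _ => by ring
  · ring
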